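/- Let A ∈ ℂ^{d_U×d_U} and B ∈ ℂ^{d_V×d_V} be antisymmetric. Contracting the Gaussian Grassmann kernels exp((1/2)Θ_U^T A Θ_U) and exp((1/2)Θ_V^T B Θ_V) over the pair (θ_{d_U}, θ_{d_U+1}) via ∫dθ_{d_U+1}∫dθ_{d_U} exp(θ_{d_U}θ_{d_U+1}) (·) yields a Gaussian kernel exp((1/2)Θ_W^T C Θ_W), where C is antisymmetric with upper-left block A restricted to indices 1..d_U−1, lower-right block B restricted to indices 2..d_V, and off-diagonal block the rank-one matrix with entries C_{i, d_U−1+j−1} = A_{i,d_U} B_{1,j} for 1 ≤ i ≤ d_U−1, 2 ≤ j ≤ d_V. -/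

import Mathlib

/-!
Write `μ = d_U` and `ν = d_U + 1`. By antisymmetry of `A`, the exponent `½ Θ_Uᵀ A Θ_U` splits as
`Q_A + x θ_μ`, where `x = ∑_{i < d_U} A_{i,d_U} θ_i` and `Q_A` involves neither `θ_μ` nor `θ_ν`;
likewise `½ Θ_Vᵀ B Θ_V = Q_B + θ_ν y`, and the contracted exponent `½ Θ_Wᵀ C Θ_W` is exactly
`Q_A + Q_B + x y`. These pieces are sums of products of two generators, hence central and
nilpotent, so the exponentials factor and `exp (x θ_μ) = 1 + x θ_μ`. The factor `exp Q_A exp Q_B`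
involves neither `θ_μ` nor `θ_ν`, so it passes through both Berezin integrals, while integrating
`(1 + θ_μ θ_ν)(1 + x θ_μ)(1 + θ_ν y)` over `θ_μ` and then `θ_ν` leaves `1 + x y`.
-/

open scoped BigOperators
open Matrix

noncomputable section

/-- The Grassmann algebra on `N` anticommuting generators over `ℂ`. -/
abbrev Gr (N : ℕ) := CliffordAlgebra (0 : QuadraticForm ℂ (Fin N → ℂ))

/-- The Grassmann generator `θ_i`. -/
def gen {N : ℕ} (i : Fin N) : Gr N :=
  CliffordAlgebra.ι (0 : QuadraticForm ℂ (Fin N → ℂ)) (Pi.single i 1)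

/-- The Berezin integral `∫ dθ_i`: it satisfies `∫dθ θ = 1` and `∫dθ 1 = 0`. -/
def berezin {N : ℕ} (i : Fin N) : Gr N →ₗ[ℂ] Gr N :=
  CliffordAlgebra.contractLeft (Q := (0 : QuadraticForm ℂ (Fin N → ℂ)))
    (LinearMap.proj i)

/-- The (terminating) exponential power series in the Grassmann algebra. -/
def gexp {N : ℕ} (a : Gr N) : Gr N :=
  ∑ k ∈ Finset.range (N + 1), (k.factorial : ℂ)⁻¹ • a ^ k

namespace CliffordAlgebra

variable {R M : Type*} [CommRing R] [AddCommGroup M] [Module R M] {Q : QuadraticForm R M}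
  (d : Module.Dual R M)

theorem contractLeft_mul (a b : CliffordAlgebra Q) :
    contractLeft d (a * b) = contractLeft d a * b + involute a * contractLeft d b := by
  induction a using CliffordAlgebra.induction generalizing b with
  | algebraMap r => simp [contractLeft_algebraMap_mul]
  | ι v => simp [contractLeft_ι_mul, contractLeft_ι, Algebra.smul_def, sub_eq_add_neg]
  | mul a₁ a₂ h₁ h₂ => rw [mul_assoc, h₁, h₂, h₁, map_mul]; noncomm_ring
  | add a₁ a₂ h₁ h₂ => rw [add_mul, map_add, h₁, h₂, map_add, map_add]; noncomm_ring

theorem contractLeft_eq_zero_of_mem_adjoin {s : Set M} (hs : ∀ v ∈ s, d v = 0)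
    {a : CliffordAlgebra Q} (ha : a ∈ Algebra.adjoin R (ι Q '' s)) : contractLeft d a = 0 := by
  induction ha using Algebra.adjoin_induction with
  | mem _ hx => obtain ⟨v, hv, rfl⟩ := hx; simp [contractLeft_ι, hs v hv]
  | algebraMap r => exact contractLeft_algebraMap Q d r
  | add _ _ _ _ ha hb => rw [map_add, ha, hb, add_zero]
  | mul _ _ _ _ ha hb => rw [contractLeft_mul, ha, hb, zero_mul, mul_zero, add_zero]

end CliffordAlgebra

namespace ExteriorAlgebra

section CommRing

open CliffordAlgebra LinearMap

variable {R M : Type*} [CommRing R] [AddCommGroup M] [Module R M]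

theorem ι_mul_ι_anticomm (x y : M) : ι R x * ι R y = -(ι R y * ι R x) :=
  eq_neg_of_add_eq_zero_left (ι_add_mul_swap x y)

theorem ι_mul_ι_mul_self (x y : M) : ι R x * ι R y * (ι R x * ι R y) = 0 := by
  rw [mul_assoc, ← mul_assoc (ι R y), ι_mul_ι_anticomm y x, neg_mul, mul_neg, ← mul_assoc,
    ← mul_assoc, ι_sq_zero, zero_mul, zero_mul, neg_zero]

theorem commute_ι_mul_ι (x y : M) (z : ExteriorAlgebra R M) : Commute (ι R x * ι R y) z := by
  induction z using CliffordAlgebra.induction with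
  | algebraMap r => exact (Algebra.commutes r _).symm
  | ι w =>
    change ι R x * ι R y * ι R w = ι R w * (ι R x * ι R y)
    rw [mul_assoc, ι_mul_ι_anticomm y w, mul_neg, ← mul_assoc, ι_mul_ι_anticomm x w, neg_mul,
      neg_neg, mul_assoc]
  | mul a b ha hb => exact ha.mul_right hb
  | add a b ha hb => exact ha.add_right hb

theorem mul_mem_exteriorPower_two {u w : ExteriorAlgebra R M} (hu : u ∈ range (ι R))
    (hw : w ∈ range (ι R)) : u * w ∈ ⋀[R]^2 M := by
  rw [exteriorPower, pow_two]
  exact Submodule.mul_mem_mul hu hw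

theorem ι_mul_ι_mem_exteriorPower_two (x y : M) : ι R x * ι R y ∈ ⋀[R]^2 M :=
  mul_mem_exteriorPower_two (mem_range_self _ x) (mem_range_self _ y)

theorem mem_center_of_mem_exteriorPower_two {u : ExteriorAlgebra R M} (hu : u ∈ ⋀[R]^2 M) :
    u ∈ Subalgebra.center R (ExteriorAlgebra R M) := by
  rw [exteriorPower, pow_two] at hu
  refine Submodule.mul_induction_on hu ?_ fun _ _ => add_mem
  rintro _ ⟨x, rfl⟩ _ ⟨y, rfl⟩
  exact Subalgebra.mem_center_iff.mpr fun z => (commute_ι_mul_ι x y z).symm.eq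

theorem contractLeft_contractLeft_pair {d₁ d₂ : Module.Dual R M} {a b : M}
    (ha₁ : d₁ a = 1) (hb₁ : d₁ b = 0) (hb₂ : d₂ b = 1) {x y E : ExteriorAlgebra R M}
    (hx : x ∈ (ker d₁ ⊓ ker d₂).map (ι R)) (hy : y ∈ (ker d₁ ⊓ ker d₂).map (ι R))
    (hE : E ∈ Algebra.adjoin R ((ker d₁ ⊓ ker d₂).map (ι R) : Set (ExteriorAlgebra R M))) :
    contractLeft d₂ (contractLeft d₁
      ((1 + ι R a * ι R b) * ((1 + x * ι R a) * (1 + ι R b * y)) * E)) = (1 + x * y) * E := by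
  obtain ⟨x, ⟨hx₁ : d₁ x = 0, hx₂ : d₂ x = 0⟩, rfl⟩ := hx
  obtain ⟨y, ⟨hy₁ : d₁ y = 0, hy₂ : d₂ y = 0⟩, rfl⟩ := hy
  rw [Submodule.map_coe] at hE
  have hE₁ : contractLeft d₁ E = 0 :=
    contractLeft_eq_zero_of_mem_adjoin d₁ (fun v hv => hv.1) hE
  have hE₂ : contractLeft d₂ E = 0 :=
    contractLeft_eq_zero_of_mem_adjoin d₂ (fun v hv => hv.2) hE
  have hPX : ι R a * ι R b * (ι R x * ι R a) = 0 := by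
    rw [(commute_ι_mul_ι a b _).eq, mul_assoc, ← mul_assoc (ι R a), ι_sq_zero, zero_mul,
      mul_zero]
  have hPY : ι R a * ι R b * (ι R b * ι R y) = 0 := by
    rw [mul_assoc, ← mul_assoc (ι R b), ι_sq_zero, zero_mul, mul_zero]
  have hP : ι R a * ι R b * ((1 + ι R x * ι R a) * (1 + ι R b * ι R y)) = ι R a * ι R b := by
    calc _ = ι R a * ι R b + ι R a * ι R b * (ι R x * ι R a) * (1 + ι R b * ι R y)
          + ι R a * ι R b * (ι R b * ι R y) := by noncomm_ring
      _ = ι R a * ι R b := by rw [hPX, hPY]; noncomm_ring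
  rw [add_mul, one_mul, hP]
  simp only [mul_add, mul_one, add_mul, one_mul, mul_assoc, map_add, map_neg, contractLeft_ι_mul,
    ha₁, hb₁, hb₂, hx₁, hx₂, hy₁, hy₂, hE₁, hE₂, zero_smul, one_smul, mul_zero, sub_zero, zero_sub,
    zero_add, sub_self, neg_zero, neg_neg]
  abel

end CommRing

section Field

variable {K V : Type*} [Field K] [AddCommGroup V] [Module K V] [FiniteDimensional K V]

theorem exteriorPower_eq_bot {n : ℕ} (hn : Module.finrank K V < n) : ⋀[K]^n V = ⊥ := by
  rw [← Submodule.finrank_eq_zero, exteriorPower.finrank_eq, Nat.choose_eq_zero_of_lt hn]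

theorem pow_eq_zero_of_mem_exteriorPower_two {u : ExteriorAlgebra K V} (hu : u ∈ ⋀[K]^2 V)
    {k : ℕ} (hk : Module.finrank K V < 2 * k) : u ^ k = 0 := by
  have h := Submodule.pow_mem_pow _ hu k
  rwa [exteriorPower, ← pow_mul, ← exteriorPower, exteriorPower_eq_bot hk,
    Submodule.mem_bot] at h

theorem isNilpotent_of_mem_exteriorPower_two {u : ExteriorAlgebra K V} (hu : u ∈ ⋀[K]^2 V) :
    IsNilpotent u :=
  ⟨_, pow_eq_zero_of_mem_exteriorPower_two hu (k := Module.finrank K V + 1) (by omega)⟩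

end Field

end ExteriorAlgebra

section GaussExponent

variable {K A ι : Type*} [Field K] [Ring A] [Algebra K A]

def gaussExponent [Fintype ι] (M : Matrix ι ι K) (θ : ι → A) : A :=
  (2 : K)⁻¹ • ∑ i, ∑ j, M i j • (θ i * θ j)

theorem gaussExponent_mem [Fintype ι] {P : Submodule K A} (M : Matrix ι ι K) {θ : ι → A}
    (h : ∀ i j, θ i * θ j ∈ P) : gaussExponent M θ ∈ P :=
  P.smul_mem _ <| P.sum_mem fun i _ => P.sum_mem fun j _ => P.smul_mem _ (h i j)

theorem gaussExponent_mem_adjoin [Fintype ι] {S : Set A} (M : Matrix ι ι K) {θ : ι → A}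
    (hθ : ∀ i, θ i ∈ S) : gaussExponent M θ ∈ Algebra.adjoin K S :=
  (Subalgebra.mem_toSubmodule _).mp <| gaussExponent_mem M fun i j =>
    (Subalgebra.mem_toSubmodule _).mpr <|
      mul_mem (Algebra.subset_adjoin (hθ i)) (Algebra.subset_adjoin (hθ j))

theorem gaussExponent_mem_exteriorPower_two {V : Type*} [AddCommGroup V] [Module K V]
    [Fintype ι] (M : Matrix ι ι K) {θ : ι → ExteriorAlgebra K V}
    (hθ : ∀ i, θ i ∈ LinearMap.range (ExteriorAlgebra.ι K)) : gaussExponent M θ ∈ ⋀[K]^2 V :=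
  gaussExponent_mem M fun i j => ExteriorAlgebra.mul_mem_exteriorPower_two (hθ i) (hθ j)

theorem smul_mul_swap_of_antisymm {M : Matrix ι ι K} (hM : Mᵀ = -M) {θ : ι → A}
    (hθ : ∀ i j, θ i * θ j = -(θ j * θ i)) (i j : ι) :
    M j i • (θ j * θ i) = M i j • (θ i * θ j) := by
  rw [← transpose_apply M i j, hM, hθ, neg_apply, neg_smul_neg]

variable [CharZero K]

theorem gaussExponent_fin_castSucc {k : ℕ} {M : Matrix (Fin (k + 1)) (Fin (k + 1)) K}
    (hM : Mᵀ = -M) {θ : Fin (k + 1) → A} (hθ : ∀ i j, θ i * θ j = -(θ j * θ i)) :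
    gaussExponent M θ =
      gaussExponent (M.submatrix Fin.castSucc Fin.castSucc) (θ ∘ Fin.castSucc)
        + (∑ i : Fin k, M i.castSucc (Fin.last k) • θ i.castSucc) * θ (Fin.last k) := by
  have hlast : M (Fin.last k) (Fin.last k) = 0 := self_eq_neg.mp (congr_fun₂ hM _ _)
  simp only [gaussExponent, Fin.sum_univ_castSucc, Finset.sum_add_distrib, submatrix_apply,
    Function.comp_apply, Finset.sum_mul, smul_mul_assoc,
    smul_mul_swap_of_antisymm hM hθ _ (Fin.last k), hlast, zero_smul, add_zero]
  module

theorem gaussExponent_fin_succ {k : ℕ} {M : Matrix (Fin (k + 1)) (Fin (k + 1)) K}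
    (hM : Mᵀ = -M) {θ : Fin (k + 1) → A} (hθ : ∀ i j, θ i * θ j = -(θ j * θ i)) :
    gaussExponent M θ = gaussExponent (M.submatrix Fin.succ Fin.succ) (θ ∘ Fin.succ)
      + θ 0 * ∑ j : Fin k, M 0 j.succ • θ j.succ := by
  have hzero : M 0 0 = 0 := self_eq_neg.mp (congr_fun₂ hM _ _)
  simp only [gaussExponent, Fin.sum_univ_succ, Finset.sum_add_distrib, submatrix_apply,
    Function.comp_apply, Finset.mul_sum, mul_smul_comm, smul_mul_swap_of_antisymm hM hθ 0,
    hzero, zero_smul, zero_add]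
  module

theorem gaussExponent_fin_add {p q : ℕ} (M : Matrix (Fin (p + q)) (Fin (p + q)) K)
    (θ : Fin (p + q) → A)
    (hM : ∀ i j, M (Fin.natAdd p j) (Fin.castAdd q i) = -M (Fin.castAdd q i) (Fin.natAdd p j))
    (hθ : ∀ i j, θ (Fin.natAdd p j) * θ (Fin.castAdd q i) =
      -(θ (Fin.castAdd q i) * θ (Fin.natAdd p j))) :
    gaussExponent M θ =
      gaussExponent (M.submatrix (Fin.castAdd q) (Fin.castAdd q)) (θ ∘ Fin.castAdd q)
        + gaussExponent (M.submatrix (Fin.natAdd p) (Fin.natAdd p)) (θ ∘ Fin.natAdd p)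
        + ∑ i, ∑ j, M (Fin.castAdd q i) (Fin.natAdd p j) •
            (θ (Fin.castAdd q i) * θ (Fin.natAdd p j)) := by
  simp only [gaussExponent, Fin.sum_univ_add, Finset.sum_add_distrib, submatrix_apply,
    Function.comp_apply]
  rw [Finset.sum_comm (s := Finset.univ (α := Fin q))]
  simp only [hM, hθ, neg_smul, smul_neg, neg_neg]
  module

end GaussExponent

section Grassmann

open ExteriorAlgebra LinearMap

variable {N : ℕ}

theorem gen_eq_ι (i : Fin N) : gen i = ι ℂ (Pi.single i 1) := rfl

theorem gen_anticomm (i j : Fin N) : gen i * gen j = -(gen j * gen i) :=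
  ι_mul_ι_anticomm _ _

theorem gexp_mem {S : Subalgebra ℂ (Gr N)} {a : Gr N} (ha : a ∈ S) : gexp a ∈ S :=
  S.sum_mem fun k _ => S.smul_mem (S.pow_mem ha k) _

theorem gexp_eq_exp {a : Gr N} (ha : a ∈ ⋀[ℂ]^2 (Fin N → ℂ)) : gexp a = IsNilpotent.exp a := by
  rw [IsNilpotent.exp_eq_sum
    (pow_eq_zero_of_mem_exteriorPower_two ha (k := N + 1) (by simp; omega))]
  refine Finset.sum_congr rfl fun k _ => ?_
  rw [← Rat.cast_smul_eq_qsmul ℂ]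
  push_cast
  rfl

theorem gexp_add {a b : Gr N} (ha : a ∈ ⋀[ℂ]^2 (Fin N → ℂ)) (hb : b ∈ ⋀[ℂ]^2 (Fin N → ℂ)) :
    gexp (a + b) = gexp a * gexp b := by
  rw [gexp_eq_exp ha, gexp_eq_exp hb, gexp_eq_exp (add_mem ha hb)]
  exact IsNilpotent.exp_add_of_commute
    (Subalgebra.mem_center_iff.mp (mem_center_of_mem_exteriorPower_two hb) a)
    (isNilpotent_of_mem_exteriorPower_two ha) (isNilpotent_of_mem_exteriorPower_two hb)

theorem gexp_ι_mul_ι (x y : Fin N → ℂ) : gexp (ι ℂ x * ι ℂ y) = 1 + ι ℂ x * ι ℂ y := by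
  rw [gexp_eq_exp (ι_mul_ι_mem_exteriorPower_two x y),
    IsNilpotent.exp_eq_sum (k := 2) (by rw [pow_two, ι_mul_ι_mul_self])]
  simp [Finset.sum_range_succ]

def genSpanExcept (μ ν : Fin N) : Submodule ℂ (Gr N) :=
  (ker (proj μ) ⊓ ker (proj ν) : Submodule ℂ (Fin N → ℂ)).map (ι ℂ)

theorem gen_mem_genSpanExcept {i μ ν : Fin N} (hμ : i ≠ μ) (hν : i ≠ ν) :
    gen i ∈ genSpanExcept μ ν :=
  ⟨Pi.single i 1, ⟨by simp [hμ.symm], by simp [hν.symm]⟩, rfl⟩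

theorem berezin_berezin_contract_gexp {μ ν : Fin N} (hμν : μ ≠ ν) {α β : Type*} [Fintype α]
    [Fintype β] (M : Matrix α α ℂ) (M' : Matrix β β ℂ) {θ : α → Gr N} {θ' : β → Gr N}
    {x y : Gr N} (hθ : ∀ i, θ i ∈ genSpanExcept μ ν) (hθ' : ∀ j, θ' j ∈ genSpanExcept μ ν)
    (hx : x ∈ genSpanExcept μ ν) (hy : y ∈ genSpanExcept μ ν) :
    berezin ν (berezin μ (gexp (gen μ * gen ν) *
      (gexp (gaussExponent M θ + x * gen μ) * gexp (gaussExponent M' θ' + gen ν * y)))) =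
      gexp (gaussExponent M θ + gaussExponent M' θ' + x * y) := by
  have hQ₂ := gaussExponent_mem_exteriorPower_two M fun i => map_le_range (hθ i)
  have hQ₂' := gaussExponent_mem_exteriorPower_two M' fun j => map_le_range (hθ' j)
  have hE : gexp (gaussExponent M θ) * gexp (gaussExponent M' θ') ∈
      Algebra.adjoin ℂ (genSpanExcept μ ν : Set (Gr N)) :=
    mul_mem (gexp_mem (gaussExponent_mem_adjoin M hθ))
      (gexp_mem (gaussExponent_mem_adjoin M' hθ'))
  have hc := gexp_mem (mem_center_of_mem_exteriorPower_two hQ₂)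
  have hc' := gexp_mem (mem_center_of_mem_exteriorPower_two hQ₂')
  obtain ⟨x, hx, rfl⟩ := hx
  obtain ⟨y, hy, rfl⟩ := hy
  simp only [gen_eq_ι]
  rw [gexp_add hQ₂ (ι_mul_ι_mem_exteriorPower_two _ _),
    gexp_add hQ₂' (ι_mul_ι_mem_exteriorPower_two _ _),
    gexp_add (add_mem hQ₂ hQ₂') (ι_mul_ι_mem_exteriorPower_two _ _), gexp_add hQ₂ hQ₂',
    gexp_ι_mul_ι, gexp_ι_mul_ι, gexp_ι_mul_ι, gexp_ι_mul_ι]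
  set E := gexp (gaussExponent M θ)
  set E' := gexp (gaussExponent M' θ')
  set X := ι ℂ x * ι ℂ (Pi.single μ 1)
  set Y := ι ℂ (Pi.single ν 1) * ι ℂ y
  have hperm : E * (1 + X) * (E' * (1 + Y)) = (1 + X) * (1 + Y) * (E * E') := by
    rw [← Subalgebra.mem_center_iff.mp hc, ← Subalgebra.mem_center_iff.mp hc', mul_assoc (1 + X),
      ← mul_assoc E, ← Subalgebra.mem_center_iff.mp hc]
    simp only [mul_assoc]
  rw [hperm, ← mul_assoc, ← Subalgebra.mem_center_iff.mp (mul_mem hc hc')]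
  exact contractLeft_contractLeft_pair (by simp) (by simp [hμν]) (by simp)
    (Submodule.mem_map_of_mem hx) (Submodule.mem_map_of_mem hy) hE

end Grassmann

section Contract

/- `d_U = m + 1`, `d_V = n + 1`; the total Grassmann algebra has
`d_U + d_V = m + n + 2` generators `θ_1, …, θ_{d_U}, θ_{d_U+1}, …, θ_{d_U+d_V}`. -/
variable (m n : ℕ)

/-- `Θ_U`: the generators `θ_1, …, θ_{d_U}`. -/
def ΘU (i : Fin (m + 1)) : Gr ((m + 1) + (n + 1)) := gen (Fin.castAdd (n + 1) i)

/-- `Θ_V`: the generators `θ_{d_U+1}, …, θ_{d_U+d_V}`. -/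
def ΘV (j : Fin (n + 1)) : Gr ((m + 1) + (n + 1)) := gen (Fin.natAdd (m + 1) j)

/-- `Θ_W`: the remaining generators after removing `θ_{d_U}` and `θ_{d_U+1}`,
namely `θ_1, …, θ_{d_U−1}, θ_{d_U+2}, …, θ_{d_U+d_V}`, in order. -/
def ΘW (i : Fin (m + n)) : Gr ((m + 1) + (n + 1)) :=
  if h : i.1 < m then gen ⟨i.1, by omega⟩ else gen ⟨i.1 + 2, by have := i.2; omega⟩

/-- The contracted generating matrix `C`: upper-left block `A` restricted to
indices `1..d_U−1`, lower-right block `B` restricted to `2..d_V`, and rank-one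
off-diagonal blocks with entries `A_{i,d_U} B_{1,j}` (and their negatives). -/
def Cmat (A : Matrix (Fin (m + 1)) (Fin (m + 1)) ℂ)
    (B : Matrix (Fin (n + 1)) (Fin (n + 1)) ℂ) : Matrix (Fin (m + n)) (Fin (m + n)) ℂ :=
  fun i j =>
    if hi : i.1 < m then
      if hj : j.1 < m then A ⟨i.1, by omega⟩ ⟨j.1, by omega⟩
      else A ⟨i.1, by omega⟩ (Fin.last m) * B 0 ⟨j.1 - m + 1, by have := j.2; omega⟩
    else
      if hj : j.1 < m then
        -(A ⟨j.1, by omega⟩ (Fin.last m) * B 0 ⟨i.1 - m + 1, by have := i.2; omega⟩)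
      else B ⟨i.1 - m + 1, by have := i.2; omega⟩ ⟨j.1 - m + 1, by have := j.2; omega⟩

theorem ΘW_castAdd (i : Fin m) : ΘW m n (Fin.castAdd n i) = ΘU m n i.castSucc := by
  simp only [ΘW, ΘU, Fin.val_castAdd, Fin.is_lt, ↓reduceDIte]
  rfl

theorem ΘW_natAdd (j : Fin n) : ΘW m n (Fin.natAdd m j) = ΘV m n j.succ := by
  simp only [ΘW, ΘV, Fin.val_natAdd, add_lt_iff_neg_left, not_lt_zero, ↓reduceDIte]
  congr 1
  ext
  simp only [Fin.val_natAdd, Fin.val_succ]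
  omega

section Cmat

variable (A : Matrix (Fin (m + 1)) (Fin (m + 1)) ℂ) (B : Matrix (Fin (n + 1)) (Fin (n + 1)) ℂ)

theorem Cmat_submatrix_castAdd :
    (Cmat m n A B).submatrix (Fin.castAdd n) (Fin.castAdd n) =
      A.submatrix Fin.castSucc Fin.castSucc := by
  ext i j
  simp only [submatrix_apply, Cmat, Fin.val_castAdd, Fin.is_lt, ↓reduceDIte]
  rfl

theorem Cmat_submatrix_natAdd :
    (Cmat m n A B).submatrix (Fin.natAdd m) (Fin.natAdd m) = B.submatrix Fin.succ Fin.succ := by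
  ext i j
  simp only [submatrix_apply, Cmat, Fin.val_natAdd, add_lt_iff_neg_left, not_lt_zero, ↓reduceDIte,
    add_tsub_cancel_left]
  rfl

theorem Cmat_castAdd_natAdd (i : Fin m) (j : Fin n) :
    Cmat m n A B (Fin.castAdd n i) (Fin.natAdd m j) = A i.castSucc (Fin.last m) * B 0 j.succ := by
  simp only [Cmat, Fin.val_castAdd, Fin.is_lt, ↓reduceDIte, Fin.val_natAdd, add_lt_iff_neg_left,
    not_lt_zero, add_tsub_cancel_left]
  rfl

theorem Cmat_natAdd_castAdd (i : Fin n) (j : Fin m) :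
    Cmat m n A B (Fin.natAdd m i) (Fin.castAdd n j) =
      -(A j.castSucc (Fin.last m) * B 0 i.succ) := by
  simp only [Cmat, Fin.val_natAdd, add_lt_iff_neg_left, not_lt_zero, ↓reduceDIte, Fin.val_castAdd,
    Fin.is_lt, add_tsub_cancel_left]
  rfl

theorem gaussExponent_Cmat :
    gaussExponent (Cmat m n A B) (ΘW m n) =
      gaussExponent (A.submatrix Fin.castSucc Fin.castSucc) (ΘU m n ∘ Fin.castSucc)
        + gaussExponent (B.submatrix Fin.succ Fin.succ) (ΘV m n ∘ Fin.succ)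
        + (∑ i : Fin m, A i.castSucc (Fin.last m) • ΘU m n i.castSucc)
          * ∑ j : Fin n, B 0 j.succ • ΘV m n j.succ := by
  have hθ (i : Fin m) (j : Fin n) : ΘW m n (Fin.natAdd m j) * ΘW m n (Fin.castAdd n i) =
      -(ΘW m n (Fin.castAdd n i) * ΘW m n (Fin.natAdd m j)) := by
    rw [ΘW_castAdd, ΘW_natAdd]
    exact gen_anticomm _ _
  rw [gaussExponent_fin_add _ _ (fun i j => by rw [Cmat_natAdd_castAdd, Cmat_castAdd_natAdd]) hθ,
    Cmat_submatrix_castAdd, Cmat_submatrix_natAdd,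
    show ΘW m n ∘ Fin.castAdd n = _ from funext (ΘW_castAdd m n),
    show ΘW m n ∘ Fin.natAdd m = _ from funext (ΘW_natAdd m n)]
  simp only [ΘW_castAdd, ΘW_natAdd, Cmat_castAdd_natAdd, Finset.sum_mul_sum, smul_mul_smul_comm]
  rfl

end Cmat

/-- contracting the Gaussian kernels `exp((1/2)Θ_U^T A Θ_U)` and
`exp((1/2)Θ_V^T B Θ_V)` over the pair `(θ_{d_U}, θ_{d_U+1})` via
`∫dθ_{d_U+1} ∫dθ_{d_U} exp(θ_{d_U} θ_{d_U+1}) (·)` yields the Gaussian kernel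
`exp((1/2)Θ_W^T C Θ_W)` with `C` as in `Cmat`. -/
theorem gaussian_contraction (A : Matrix (Fin (m + 1)) (Fin (m + 1)) ℂ)
    (B : Matrix (Fin (n + 1)) (Fin (n + 1)) ℂ)
    (hA : Aᵀ = -A) (hB : Bᵀ = -B) :
    berezin (Fin.natAdd (m + 1) (0 : Fin (n + 1)))
      (berezin (Fin.castAdd (n + 1) (Fin.last m))
        (gexp (ΘU m n (Fin.last m) * ΘV m n 0) *
          (gexp ((2 : ℂ)⁻¹ • ∑ i : Fin (m + 1), ∑ j : Fin (m + 1),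
              A i j • (ΘU m n i * ΘU m n j)) *
           gexp ((2 : ℂ)⁻¹ • ∑ i : Fin (n + 1), ∑ j : Fin (n + 1),
              B i j • (ΘV m n i * ΘV m n j))))) =
      gexp ((2 : ℂ)⁻¹ • ∑ i : Fin (m + n), ∑ j : Fin (m + n),
        Cmat m n A B i j • (ΘW m n i * ΘW m n j)) := by
  have hU (i : Fin m) : ΘU m n i.castSucc ∈
      genSpanExcept (Fin.castAdd (n + 1) (Fin.last m)) (Fin.natAdd (m + 1) 0) :=
    gen_mem_genSpanExcept (by simp [Fin.ext_iff]; omega) (by simp [Fin.ext_iff]; omega)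
  have hV (j : Fin n) : ΘV m n j.succ ∈
      genSpanExcept (Fin.castAdd (n + 1) (Fin.last m)) (Fin.natAdd (m + 1) 0) :=
    gen_mem_genSpanExcept (by simp [Fin.ext_iff]; omega) (by simp [Fin.ext_iff])
  change berezin _ (berezin _ (gexp (_ * _) * (gexp (gaussExponent A (ΘU m n)) *
    gexp (gaussExponent B (ΘV m n))))) = gexp (gaussExponent (Cmat m n A B) (ΘW m n))
  rw [gaussExponent_fin_castSucc hA (θ := ΘU m n) fun _ _ => gen_anticomm _ _,
    gaussExponent_fin_succ hB (θ := ΘV m n) fun _ _ => gen_anticomm _ _, gaussExponent_Cmat]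
  exact berezin_berezin_contract_gexp (by simp [Fin.ext_iff]) _ _ hU hV
    (Submodule.sum_mem _ fun i _ => Submodule.smul_mem _ _ (hU i))
    (Submodule.sum_mem _ fun j _ => Submodule.smul_mem _ _ (hV j))

end Contract
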